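/- Let (x_m)_{m≥0} be the k-averaging process on ℝ^n with n > k ≥ 2, started from a deterministic vector x_0 with ∑_{i=1}^n x_{0,i} = 0, and let S_n(l) = ∑_{i=1}^n x_{l,i}². With τ = 1 − (k−1)/(n−1), for every l ≥ 0 one has E[S_n(l)] = τ^l · S_n(0). -/

import Mathlib

/-!
Averaging the coordinates in `A` keeps the coordinate sum and replaces `∑_{i ∈ A} x_i²` by
`(∑_{i ∈ A} x_i)² / k`. Counting the `k`-subsets that contain a given coordinate or a given pair
shows that for a uniform `A` and a mean-zero `x` the expected new sum of squares is `τ ∑ x_i²`.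
Since `x_m` is a function of `A_0, …, A_{m-1}`, which are independent of `A_m`, integrating out
`A_m` first gives `E[S_n(m+1)] = τ E[S_n(m)]`.
-/

open MeasureTheory ProbabilityTheory Filter

noncomputable section

instance (α : Type*) : MeasurableSpace (Finset α) := ⊤

/-- One averaging step: replace all coordinates in `A` by their average. -/
def avgStep {n : ℕ} (k : ℕ) (A : Finset (Fin n)) (x : Fin n → ℝ) : Fin n → ℝ :=
  fun i => if i ∈ A then (∑ j ∈ A, x j) / k else x i

/-- The `k`-averaging process driven by the sequence of chosen subsets `A · ω`. -/
def proc {Ω : Type*} {n : ℕ} (k : ℕ) (x0 : Fin n → ℝ) (A : ℕ → Ω → Finset (Fin n))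
    (ω : Ω) : ℕ → Fin n → ℝ
  | 0 => x0
  | m + 1 => avgStep k (A m ω) (proc k x0 A ω m)

instance (α : Type*) : DiscreteMeasurableSpace (Finset α) := ⟨fun _ => trivial⟩

open Finset

namespace Finset

variable {α : Type*} [DecidableEq α] {u : Finset α} {k : ℕ}

lemma sum_sum_mem_eq_sum_sum_filter_mem {M : Type*} [AddCommMonoid M] {𝒮 : Finset (Finset α)}
    (h𝒮 : ∀ s ∈ 𝒮, s ⊆ u) (f : Finset α → α → M) :
    ∑ s ∈ 𝒮, ∑ i ∈ s, f s i = ∑ i ∈ u, ∑ s ∈ 𝒮 with i ∈ s, f s i :=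
  sum_comm' fun s i => by
    simp only [mem_filter]
    exact ⟨fun ⟨hs, hi⟩ => ⟨⟨hs, hi⟩, h𝒮 s hs hi⟩, fun ⟨hsi, _⟩ => hsi⟩

lemma card_powersetCard_filter_mem {i : α} (hi : i ∈ u) (hk : 1 ≤ k) :
    #{s ∈ powersetCard k u | i ∈ s} = (#u - 1).choose (k - 1) := by
  simpa using card_filter_powersetCard_subset {i} u k (singleton_subset_iff.2 hi) (by simpa)

lemma card_powersetCard_filter_mem_mem {i j : α} (hi : i ∈ u) (hj : j ∈ u) (hij : i ≠ j)
    (hk : 2 ≤ k) :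
    #{s ∈ powersetCard k u | i ∈ s ∧ j ∈ s} = (#u - 2).choose (k - 2) := by
  simpa [insert_subset_iff, card_pair hij] using card_filter_powersetCard_subset {i, j} u k
    (by simp [insert_subset_iff, hi, hj]) (by rwa [card_pair hij])

lemma sum_powersetCard_sum {M : Type*} [AddCommMonoid M] (hk : 1 ≤ k) (g : α → M) :
    ∑ s ∈ powersetCard k u, ∑ i ∈ s, g i = (#u - 1).choose (k - 1) • ∑ i ∈ u, g i := by
  rw [sum_sum_mem_eq_sum_sum_filter_mem (fun s hs => (mem_powersetCard.1 hs).1), smul_sum]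
  refine sum_congr rfl fun i hi => ?_
  rw [sum_const, card_powersetCard_filter_mem hi hk]

lemma sum_powersetCard_sq_sum {R : Type*} [CommRing R] (hk : 2 ≤ k) (y : α → R) :
    ∑ s ∈ powersetCard k u, (∑ i ∈ s, y i) ^ 2
      = (#u - 1).choose (k - 1) • ∑ i ∈ u, y i ^ 2
        + (#u - 2).choose (k - 2) • ((∑ i ∈ u, y i) ^ 2 - ∑ i ∈ u, y i ^ 2) := by
  have h_sets_mem : ∀ i ∈ u, ∑ s ∈ powersetCard k u with i ∈ s, ∑ j ∈ s, y j
      = (#u - 1).choose (k - 1) • y i + (#u - 2).choose (k - 2) • (∑ j ∈ u, y j - y i) := by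
    intro i hi
    rw [sum_sum_mem_eq_sum_sum_filter_mem
        (fun s hs => (mem_powersetCard.1 (mem_filter.1 hs).1).1), ← add_sum_erase _ _ hi,
      ← sum_erase_eq_sub hi, smul_sum]
    simp only [filter_filter, sum_const, and_self]
    rw [card_powersetCard_filter_mem hi (by omega)]
    congr 1
    refine sum_congr rfl fun j hj => ?_
    rw [card_powersetCard_filter_mem_mem hi (mem_of_mem_erase hj) (ne_of_mem_erase hj).symm hk]
  calc ∑ s ∈ powersetCard k u, (∑ i ∈ s, y i) ^ 2
      = ∑ s ∈ powersetCard k u, ∑ i ∈ s, y i * ∑ j ∈ s, y j := by simp only [sq, sum_mul]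
    _ = ∑ i ∈ u, y i * ∑ s ∈ powersetCard k u with i ∈ s, ∑ j ∈ s, y j := by
      rw [sum_sum_mem_eq_sum_sum_filter_mem (fun s hs => (mem_powersetCard.1 hs).1)]
      simp only [mul_sum]
    _ = ∑ i ∈ u, y i * ((#u - 1).choose (k - 1) • y i
          + (#u - 2).choose (k - 2) • (∑ j ∈ u, y j - y i)) :=
      sum_congr rfl fun i hi => by rw [h_sets_mem i hi]
    _ = _ := by
      simp only [nsmul_eq_mul, mul_add, mul_sub, sum_add_distrib, sum_sub_distrib,
        mul_left_comm (y _), ← mul_sum, ← sum_mul, sq]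

end Finset

section avgStep

variable {n k : ℕ} {s : Finset (Fin n)}

lemma sum_comp_avgStep (φ : ℝ → ℝ) (y : Fin n → ℝ) :
    ∑ i, φ (avgStep k s y i) = #s • φ ((∑ i ∈ s, y i) / k) + ∑ i ∈ sᶜ, φ (y i) := by
  rw [← sum_add_sum_compl s, ← sum_const]
  congr 1 <;> refine sum_congr rfl fun i hi => ?_
  · simp [avgStep, hi]
  · simp [avgStep, mem_compl.1 hi]

lemma sum_avgStep (hs : #s = k) (y : Fin n → ℝ) : ∑ i, avgStep k s y i = ∑ i, y i := by
  obtain rfl | hk := eq_or_ne k 0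
  · simp [avgStep, card_eq_zero.1 hs]
  rw [sum_comp_avgStep (fun t => t), ← sum_add_sum_compl s y, hs, nsmul_eq_mul,
    mul_div_cancel₀ _ (Nat.cast_ne_zero.2 hk)]

lemma sum_sq_avgStep (hs : #s = k) (y : Fin n → ℝ) :
    ∑ i, avgStep k s y i ^ 2 = ∑ i, y i ^ 2 - ∑ i ∈ s, y i ^ 2 + (∑ i ∈ s, y i) ^ 2 / k := by
  obtain rfl | hk := eq_or_ne k 0
  · simp [avgStep, card_eq_zero.1 hs]
  rw [sum_comp_avgStep (· ^ 2), ← sum_add_sum_compl s (y · ^ 2), hs, nsmul_eq_mul]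
  field_simp
  ring

/-- Each coordinate lies in a uniformly random `k`-subset with probability `k / n`, and each pair
of coordinates with probability `k (k - 1) / (n (n - 1))`. -/
lemma sum_powersetCard_sum_sq_avgStep (hk : 2 ≤ k) (hkn : k < n) {y : Fin n → ℝ}
    (hy : ∑ i, y i = 0) :
    ∑ s ∈ powersetCard k univ, ∑ i, avgStep k s y i ^ 2
      = n.choose k * ((1 - ((k : ℝ) - 1) / ((n : ℝ) - 1)) * ∑ i, y i ^ 2) := by
  rw [sum_congr rfl fun s hs => sum_sq_avgStep (mem_powersetCard.1 hs).2 y, sum_add_distrib,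
    sum_sub_distrib, sum_const, sum_powersetCard_sum (by omega), ← sum_div,
    sum_powersetCard_sq_sum hk, hy, card_powersetCard, card_univ, Fintype.card_fin]
  obtain ⟨k, rfl⟩ : ∃ j, k = j + 2 := ⟨k - 2, by omega⟩
  obtain ⟨n, rfl⟩ : ∃ m, n = m + 2 := ⟨n - 2, by omega⟩
  have h₁ : ((n : ℝ) + 2) * (n + 1).choose (k + 1) = (n + 2).choose (k + 2) * ((k : ℝ) + 2) := by
    exact_mod_cast Nat.add_one_mul_choose_eq (n + 1) (k + 1)
  have h₂ : ((n : ℝ) + 1) * n.choose k = (n + 1).choose (k + 1) * ((k : ℝ) + 1) := by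
    exact_mod_cast Nat.add_one_mul_choose_eq n k
  simp only [Nat.add_sub_cancel, nsmul_eq_mul]
  push_cast
  rw [show (n : ℝ) + 2 - 1 = n + 1 by ring, show (k : ℝ) + 2 - 1 = k + 1 by ring]
  field_simp
  linear_combination (-(∑ i, y i ^ 2)) * h₂ - (k + 1) * (∑ i, y i ^ 2) * h₁

end avgStep

section UniformSubset

variable {Ω α : Type*} [MeasurableSpace Ω] {μ : Measure Ω} {A : Ω → Finset α} {k : ℕ}
  {c : ENNReal}

lemma ae_card_eq_of_uniform [Countable α] (hA : Measurable A)
    (hlaw : ∀ s, μ (A ⁻¹' {s}) = if #s = k then c else 0) : ∀ᵐ ω ∂μ, #(A ω) = k := by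
  refine ae_of_ae_map (p := fun s => #s = k) hA.aemeasurable
    (ae_iff_of_countable.2 fun s hs => ?_)
  by_contra h
  rw [Measure.map_apply hA (measurableSet_singleton s), hlaw, if_neg h] at hs
  exact hs rfl

lemma integral_map_of_uniform [Fintype α] [IsFiniteMeasure μ] (hA : Measurable A)
    (hlaw : ∀ s, μ (A ⁻¹' {s}) = if #s = k then c else 0) (g : Finset α → ℝ) :
    ∫ s, g s ∂(μ.map A) = c.toReal * ∑ s ∈ powersetCard k univ, g s := by
  rw [integral_fintype .of_finite, powersetCard_eq_filter, powerset_univ, sum_filter, mul_sum]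
  refine sum_congr rfl fun s _ => ?_
  rw [map_measureReal_apply hA (measurableSet_singleton s), measureReal_def, hlaw]
  split_ifs <;> simp

end UniformSubset

lemma ProbabilityTheory.IndepFun.integral_comp_eq_integral_integral_map {Ω α β : Type*}
    [MeasurableSpace Ω] {μ : Measure Ω} [IsFiniteMeasure μ]
    [MeasurableSpace α] [MeasurableSingletonClass α] [Finite α]
    [MeasurableSpace β] [MeasurableSingletonClass β] [Finite β]
    {A : Ω → α} {H : Ω → β} (hA : Measurable A) (hH : Measurable H) (hAH : IndepFun A H μ)
    (f : α → β → ℝ) :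
    ∫ ω, f (A ω) (H ω) ∂μ = ∫ ω, ∫ a, f a (H ω) ∂(μ.map A) ∂μ := by
  calc ∫ ω, f (A ω) (H ω) ∂μ = ∫ p, f p.1 p.2 ∂(μ.map fun ω => (A ω, H ω)) :=
        (integral_map (f := fun p : α × β => f p.1 p.2) (hA.prodMk hH).aemeasurable
          .of_discrete).symm
    _ = ∫ h, ∫ a, f a h ∂(μ.map A) ∂(μ.map H) := by
        rw [hAH.map_prod_eq_prod_map_map hA.aemeasurable hH.aemeasurable,
          integral_prod_symm _ .of_finite]
    _ = ∫ ω, ∫ a, f a (H ω) ∂(μ.map A) ∂μ := integral_map hH.aemeasurable .of_discrete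

section History

variable {Ω : Type*} {n k : ℕ}

lemma proc_congr (x0 : Fin n → ℝ) {Ω' : Type*} {A : ℕ → Ω → Finset (Fin n)}
    {B : ℕ → Ω' → Finset (Fin n)} {ω : Ω} {ω' : Ω'} {m : ℕ} (h : ∀ j < m, A j ω = B j ω') :
    proc k x0 A ω m = proc k x0 B ω' m := by
  induction m with
  | zero => rfl
  | succ m ih =>
    rw [proc, proc, h m m.lt_succ_self, ih fun j hj => h j (hj.trans m.lt_succ_self)]

lemma exists_proc_eq_comp_history (x0 : Fin n → ℝ) (A : ℕ → Ω → Finset (Fin n)) (m : ℕ) :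
    ∃ G : (range m → Finset (Fin n)) → Fin n → ℝ,
      ∀ ω, proc k x0 A ω m = G fun j => A j ω :=
  ⟨fun h => proc k x0 (fun j (_ : Unit) => if hj : j ∈ range m then h ⟨j, hj⟩ else ∅) () m,
    fun _ => proc_congr x0 fun j hj => by rw [dif_pos (mem_range.2 hj)]⟩

end History

/-- For the `k`-averaging process started from a mean-zero vector,
`E[S_n(l)] = (1 - (k-1)/(n-1))^l · S_n(0)`. -/
theorem averaging_expected_sq_sum_decay
    (n k : ℕ) (hk : 2 ≤ k) (hn : k < n)
    (Ω : Type*) [MeasurableSpace Ω]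
    (μ : Measure Ω) [IsProbabilityMeasure μ]
    (A : ℕ → Ω → Finset (Fin n))
    (hmeas : ∀ m, Measurable (A m))
    (hindep : iIndepFun A μ)
    (hunif : ∀ (m : ℕ) (s : Finset (Fin n)),
      μ (A m ⁻¹' {s}) = if s.card = k then ((n.choose k : ENNReal))⁻¹ else 0)
    (x0 : Fin n → ℝ) (hx0 : ∑ i, x0 i = 0) (l : ℕ) :
    ∫ ω, (∑ i, (proc k x0 A ω l i) ^ 2) ∂μ
      = (1 - ((k : ℝ) - 1) / ((n : ℝ) - 1)) ^ l * ∑ i, (x0 i) ^ 2 := by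
  have hsum : ∀ᵐ ω ∂μ, ∀ m, ∑ i, proc k x0 A ω m i = 0 := by
    filter_upwards [ae_all_iff.2 fun m => ae_card_eq_of_uniform (hmeas m) (hunif m)] with ω hω m
    induction m with
    | zero => exact hx0
    | succ m ih => rw [proc, sum_avgStep (hω m), ih]
  induction l with
  | zero => simp [proc]
  | succ m ih =>
    obtain ⟨G, hG⟩ := exists_proc_eq_comp_history (k := k) x0 A m
    have hAH : IndepFun (A m) (fun ω (j : range m) => A j ω) μ :=
      (hindep.indepFun_finset {m} (range m) (by simp) hmeas).comp
        (measurable_pi_apply (⟨m, mem_singleton_self m⟩ : ({m} : Finset ℕ))) measurable_id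
    have hC : (n.choose k : ℝ) ≠ 0 := Nat.cast_ne_zero.2 (Nat.choose_pos hn.le).ne'
    calc ∫ ω, ∑ i, proc k x0 A ω (m + 1) i ^ 2 ∂μ
        = ∫ ω, ∫ s, ∑ i, avgStep k s (proc k x0 A ω m) i ^ 2 ∂(μ.map (A m)) ∂μ := by
          simp only [proc, hG]
          exact hAH.integral_comp_eq_integral_integral_map (hmeas m)
            (measurable_pi_lambda (fun ω (j : range m) => A j ω) fun j => hmeas j)
            fun s h => ∑ i, avgStep k s (G h) i ^ 2
      _ = ∫ ω, (1 - ((k : ℝ) - 1) / ((n : ℝ) - 1)) * ∑ i, proc k x0 A ω m i ^ 2 ∂μ := by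
          refine integral_congr_ae ?_
          filter_upwards [hsum] with ω hω
          rw [integral_map_of_uniform (hmeas m) (hunif m),
            sum_powersetCard_sum_sq_avgStep hk hn (hω m), ENNReal.toReal_inv,
            ENNReal.toReal_natCast, inv_mul_cancel_left₀ hC]
      _ = _ := by rw [integral_const_mul, ih, pow_succ]; ring

end
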